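/- arXiv:1709.05003 — 3 statements merged into one kernel-verified Lean document; each statement's English description precedes it below -/
import Mathlib

section
/- Every graph G that is 3-Ramsey for K_3 is also 3-Ramsey for K_3 + K_2; that is, every 3-edge-colouring of G contains a monochromatic triangle together with a vertex-disjoint edge of the same colour. -/
open SimpleGraph

/-- The vertex-disjoint union `K_n + K_m` of two complete graphs. -/
def cliqueSum (n m : ℕ) : SimpleGraph (Fin n ⊕ Fin m) :=
  SimpleGraph.fromRel fun x y =>
    (∃ a b, x = Sum.inl a ∧ y = Sum.inl b) ∨ (∃ a b, x = Sum.inr a ∧ y = Sum.inr b)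

/-- There is a copy of `H` in `G` that is monochromatic in colour `i`
under the edge-colouring `c`. -/
def MonoCopy {V W : Type*} {r : ℕ} (G : SimpleGraph V) (H : SimpleGraph W)
    (c : Sym2 V → Fin r) (i : Fin r) : Prop :=
  ∃ f : H →g G, Function.Injective f ∧ ∀ u v, H.Adj u v → c s(f u, f v) = i

/-- `G` is `r`-Ramsey for `H`: every `r`-colouring of the edges of `G`
admits a monochromatic copy of `H`. -/
def IsRamseyFor {V W : Type*} (r : ℕ) (G : SimpleGraph V) (H : SimpleGraph W) : Prop :=
  ∀ c : Sym2 V → Fin r, ∃ i : Fin r, MonoCopy G H c i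

/-- `G₁` and `G₂` are `r`-Ramsey equivalent. -/
def RamseyEquiv {V W : Type*} (r : ℕ) (G₁ : SimpleGraph V) (G₂ : SimpleGraph W) : Prop :=
  ∀ {U : Type*} (G : SimpleGraph U), IsRamseyFor r G G₁ ↔ IsRamseyFor r G G₂

/-- `N` has the Ramsey property for clique sizes `n : Fin r → ℕ`: every `r`-colouring of
the edges of `K_N` admits a colour `i` and an `i`-monochromatic clique of size `n i`. -/
def HasRamseyProp (N : ℕ) {r : ℕ} (n : Fin r → ℕ) : Prop :=
  ∀ c : Sym2 (Fin N) → Fin r, ∃ i : Fin r, ∃ s : Finset (Fin N),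
    s.card = n i ∧ ∀ u ∈ s, ∀ v ∈ s, u ≠ v → c s(u, v) = i

/-- The Ramsey number `R_r(n 0, …, n (r-1))`. -/
noncomputable def ramseyNumber {r : ℕ} (n : Fin r → ℕ) : ℕ :=
  sInf {N | HasRamseyProp N n}
/-! Let `c` be a 3-colouring of `G` with no monochromatic `K₃ + K₂`, call a colour alive if it
has a monochromatic triangle, and fix one such triangle for each alive colour. Every edge of an
alive colour meets the triangle of that colour, so the set `S` of the at most nine vertices of the
chosen triangles meets every edge of an alive colour.

Schur's partition `{±1, ±4}, {±2, ±3}, {5, …, 9}` of `ℤ/14 ∖ {0}` consists of three symmetric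
sum-free classes of at least three elements each. Label `S` injectively by nonzero residues whose
class is alive and every other vertex by `0`; keep the colour of the edges outside `S` and give an
edge `uv` meeting `S` the class of `φ u - φ v`. A monochromatic triangle of the new colouring with
pairwise distinct labels contradicts sum-freeness. Otherwise two of its vertices lie outside `S`,
and the edge joining them keeps its colour, which is alive (the third vertex is outside too, or
its label has that class): impossible. So the new colouring has no monochromatic triangle. -/

open Finset Function

theorem exists_mapsTo_injOn_eq_zero_of_card_le {α β : Type*} [Zero β] {s : Finset α}
    {t : Finset β} (h : #s ≤ #t) :
    ∃ φ : α → β, Set.MapsTo φ s t ∧ Set.InjOn φ s ∧ ∀ a ∉ s, φ a = 0 := by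
  classical
  obtain ⟨e⟩ := Function.Embedding.nonempty_of_card_le (α := s) (β := t) (by simpa using h)
  refine ⟨fun a => if ha : a ∈ s then e ⟨a, ha⟩ else 0, fun a ha => ?_,
    fun a ha b hb hab => ?_, fun a ha => dif_neg ha⟩
  · simp only [mem_coe] at ha
    simp only [dif_pos ha, mem_coe, coe_mem]
  · simp only [mem_coe] at ha hb
    simp only [dif_pos ha, dif_pos hb, Subtype.val_inj] at hab
    exact congrArg Subtype.val (e.injective hab)

section MonoClique

variable {V : Type*} {r : ℕ}

def IsMonoClique (G : SimpleGraph V) (c : Sym2 V → Fin r) (i : Fin r) {n : ℕ} (a : Fin n → V) :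
    Prop :=
  Pairwise fun x y => G.Adj (a x) (a y) ∧ c s(a x, a y) = i

variable {G : SimpleGraph V} {c : Sym2 V → Fin r} {i : Fin r} {n m : ℕ}

theorem MonoCopy.exists_isMonoClique (h : MonoCopy G (completeGraph (Fin n)) c i) :
    ∃ a : Fin n → V, IsMonoClique G c i a := by
  obtain ⟨f, -, hf⟩ := h
  exact ⟨f, fun x y hxy => ⟨f.map_adj hxy, hf x y hxy⟩⟩

theorem isMonoClique_pair {p q : V} (hpq : G.Adj p q) (hc : c s(p, q) = i) :
    IsMonoClique G c i ![p, q] := by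
  intro x y hxy
  fin_cases x <;> fin_cases y <;> simp_all [hpq.symm, Sym2.eq_swap]

theorem IsMonoClique.injective {a : Fin n → V} (ha : IsMonoClique G c i a) : Injective a :=
  fun _ _ hxy => by_contra fun hne => (ha hne).1.ne hxy

theorem IsMonoClique.monoCopy_cliqueSum {a : Fin n → V} {b : Fin m → V}
    (ha : IsMonoClique G c i a) (hb : IsMonoClique G c i b) (hab : ∀ x y, a x ≠ b y) :
    MonoCopy G (cliqueSum n m) c i := by
  have key : ∀ u v, (cliqueSum n m).Adj u v →
      G.Adj (Sum.elim a b u) (Sum.elim a b v) ∧ c s(Sum.elim a b u, Sum.elim a b v) = i := by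
    rintro (_ | _) (_ | _) huv
    · exact ha (by simpa [cliqueSum] using huv)
    · simp [cliqueSum] at huv
    · simp [cliqueSum] at huv
    · exact hb (by simpa [cliqueSum] using huv)
  refine ⟨⟨Sum.elim a b, fun h => (key _ _ h).1⟩, ?_, fun u v h => (key u v h).2⟩
  rintro (x | x) (y | y) hxy
  · exact congrArg Sum.inl (ha.injective hxy)
  · exact absurd hxy (hab x y)
  · exact absurd hxy.symm (hab y x)
  · exact congrArg Sum.inr (hb.injective hxy)

theorem IsMonoClique.mem_range_or_mem_range {a : Fin n → V}
    (hno : ¬ MonoCopy G (cliqueSum n 2) c i) (ha : IsMonoClique G c i a) {p q : V}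
    (hpq : G.Adj p q) (hc : c s(p, q) = i) : p ∈ Set.range a ∨ q ∈ Set.range a := by
  by_contra! h
  refine hno (ha.monoCopy_cliqueSum (isMonoClique_pair hpq hc) fun x y hxy => ?_)
  fin_cases y
  · exact h.1 ⟨x, hxy⟩
  · exact h.2 ⟨x, hxy⟩

end MonoClique

section Recolour

variable {X : Type*}

def IsSumFree [Add X] (s : Set X) : Prop :=
  ∀ a ∈ s, ∀ b ∈ s, a + b ∉ s

variable [AddGroup X] {κ : Type*} {f : X → κ}

theorem not_pairwise_apply_sub_eq_of_isSumFree (hf : ∀ i, IsSumFree {a | a ≠ 0 ∧ f a = i})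
    {a : Fin 3 → X} (ha : Injective a) (i : κ) : ¬ Pairwise fun x y => f (a x - a y) = i := by
  intro h
  have hne : ∀ {x y}, x ≠ y → a x - a y ≠ 0 := fun hxy => sub_ne_zero.2 (ha.ne hxy)
  refine hf i (a 0 - a 1) ⟨hne (by decide), h (by decide)⟩ (a 1 - a 2)
    ⟨hne (by decide), h (by decide)⟩ ?_
  rw [sub_add_sub_cancel]
  exact ⟨hne (by decide), h (by decide)⟩

variable [DecidableEq X] {V : Type*}

def recolour (c : Sym2 V → κ) (hf : ∀ a, f (-a) = f a) (φ : V → X) : Sym2 V → κ :=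
  Sym2.lift ⟨fun u v => if φ u = 0 ∧ φ v = 0 then c s(u, v) else f (φ u - φ v), fun u v => by
    dsimp only
    rw [Sym2.eq_swap, ← neg_sub (φ v), hf]
    simp only [and_comm]⟩

@[simp]
theorem recolour_mk (c : Sym2 V → κ) (hf : ∀ a, f (-a) = f a) (φ : V → X) (u v : V) :
    recolour c hf φ s(u, v) = if φ u = 0 ∧ φ v = 0 then c s(u, v) else f (φ u - φ v) :=
  rfl

end Recolour

section Labelling

variable {V X : Type*} {r : ℕ}

structure IsAdmissibleLabelling [Zero X] (G : SimpleGraph V) (c : Sym2 V → Fin r) (f : X → Fin r)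
    (n : ℕ) (φ : V → X) : Prop where
  injective_of_ne_zero : ∀ u v, φ u ≠ 0 → φ u = φ v → u = v
  exists_isMonoClique_of_ne_zero : ∀ v, φ v ≠ 0 → ∃ t : Fin n → V, IsMonoClique G c (f (φ v)) t
  not_exists_isMonoClique_of_eq_zero : ∀ p q, G.Adj p q → φ p = 0 → φ q = 0 →
    ¬ ∃ t : Fin n → V, IsMonoClique G c (c s(p, q)) t

variable {G : SimpleGraph V} {c : Sym2 V → Fin r} {f : X → Fin r}

theorem IsAdmissibleLabelling.not_monoCopy_recolour [AddGroup X] [DecidableEq X]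
    (hf : ∀ a, f (-a) = f a) (hsf : ∀ i, IsSumFree {a | a ≠ 0 ∧ f a = i})
    {φ : V → X} (hφ : IsAdmissibleLabelling G c f 3 φ) (i : Fin r) :
    ¬ MonoCopy G (completeGraph (Fin 3)) (recolour c hf φ) i := by
  obtain ⟨hinj, hin, hout⟩ := hφ
  intro h
  obtain ⟨w, hw⟩ := h.exists_isMonoClique
  by_cases hφw : Injective (φ ∘ w)
  · refine not_pairwise_apply_sub_eq_of_isSumFree hsf hφw i fun x y hxy => ?_
    have hxy' : ¬ (φ (w x) = 0 ∧ φ (w y) = 0) := fun h0 => hxy (hφw (h0.1.trans h0.2.symm))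
    simpa [hxy'] using (hw hxy).2
  obtain ⟨x, y, hφxy, hxy⟩ : ∃ x y, φ (w x) = φ (w y) ∧ x ≠ y := by
    simpa [Injective] using hφw
  have hx : φ (w x) = 0 := by
    by_contra hx
    exact (hw hxy).1.ne (hinj _ _ hx hφxy)
  have hy : φ (w y) = 0 := hφxy ▸ hx
  have hc : c s(w x, w y) = i := by simpa [hx, hy] using (hw hxy).2
  refine hout _ _ (hw hxy).1 hx hy (hc ▸ ?_)
  obtain ⟨z, hzx, hzy⟩ : ∃ z, z ≠ x ∧ z ≠ y :=
    (by decide : ∀ x y : Fin 3, ∃ z, z ≠ x ∧ z ≠ y) x y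
  by_cases hz : φ (w z) = 0
  · have hzero : ∀ u, φ (w u) = 0 := by
      have hcover : ∀ x y z u : Fin 3, x ≠ y → z ≠ x → z ≠ y → u = x ∨ u = y ∨ u = z := by
        decide
      intro u
      rcases hcover x y z u hxy hzx hzy with rfl | rfl | rfl <;> assumption
    refine ⟨w, fun u v huv => ⟨(hw huv).1, ?_⟩⟩
    simpa [hzero u, hzero v] using (hw huv).2
  · have hzx' := (hw hzx).2
    rw [recolour_mk, if_neg fun h0 => hz h0.1, hx, sub_zero] at hzx'
    exact hzx' ▸ hin _ hz

theorem exists_isAdmissibleLabelling [Zero X] [Fintype X] [DecidableEq X] {n : ℕ}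
    (hcard : ∀ i, n ≤ #{a | a ≠ 0 ∧ f a = i}) (hno : ∀ i, ¬ MonoCopy G (cliqueSum n 2) c i) :
    ∃ φ : V → X, IsAdmissibleLabelling G c f n φ := by
  classical
  set A : Finset (Fin r) := {i | ∃ t : Fin n → V, IsMonoClique G c i t}
  choose t ht using fun i (hi : i ∈ A) => (mem_filter.1 hi).2
  set S : Finset V := A.attach.biUnion fun i => univ.image (t i i.2)
  set T : Finset X := A.biUnion fun i => {a | a ≠ 0 ∧ f a = i}
  have hST : #S ≤ #T := calc
    #S ≤ #A * n := by
      simpa using card_biUnion_le_card_mul A.attach _ n fun i _ => card_image_le.trans_eq (by simp)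
    _ ≤ ∑ i ∈ A, #{a | a ≠ 0 ∧ f a = i} := by
      simpa using card_nsmul_le_sum A _ n fun i _ => hcard i
    _ = #T := by
      refine (card_biUnion fun i _ j _ hij => disjoint_filter.2 fun a _ hi hj => ?_).symm
      exact hij (hi.2.symm.trans hj.2)
  obtain ⟨φ, hφST, hφinj, hφ0⟩ := exists_mapsTo_injOn_eq_zero_of_card_le hST
  have hφS : ∀ v ∈ S, φ v ≠ 0 := fun v hv h0 => by
    simpa [T, h0] using hφST hv
  have hmemS : ∀ v, φ v ≠ 0 → v ∈ S := fun v hv => by_contra fun hvS => hv (hφ0 v hvS)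
  refine ⟨φ, ⟨fun u v hu huv => hφinj (hmemS u hu) (hmemS v (huv ▸ hu)) huv,
    fun v hv => ?_, fun p q hpq hp hq halive => ?_⟩⟩
  · obtain ⟨i, hi, hvi⟩ := mem_biUnion.1 (hφST (hmemS v hv))
    exact (mem_filter.1 hvi).2.2 ▸ (mem_filter.1 hi).2
  · have hA : c s(p, q) ∈ A := mem_filter.2 ⟨mem_univ _, halive⟩
    have hrange : ∀ v ∈ Set.range (t _ hA), v ∈ S := by
      rintro v ⟨x, rfl⟩
      exact mem_biUnion.2 ⟨⟨_, hA⟩, mem_attach _ _, mem_image_of_mem _ (mem_univ x)⟩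
    rcases (ht _ hA).mem_range_or_mem_range (hno _) hpq rfl with hpS | hqS
    · exact hφS p (hrange p hpS) hp
    · exact hφS q (hrange q hqS) hq

end Labelling

def schurColour (a : ZMod 14) : Fin 3 :=
  if a ∈ ({1, 4, 10, 13} : Finset (ZMod 14)) then 0
  else if a ∈ ({2, 3, 11, 12} : Finset (ZMod 14)) then 1 else 2

theorem schurColour_neg : ∀ a, schurColour (-a) = schurColour a := by
  decide

theorem isSumFree_schurColour (i : Fin 3) : IsSumFree {a | a ≠ 0 ∧ schurColour a = i} := by
  have h : ∀ a b : ZMod 14, a ≠ 0 → b ≠ 0 → a + b ≠ 0 → schurColour b = schurColour a →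
      schurColour (a + b) ≠ schurColour a := by
    decide
  rintro a ⟨ha, rfl⟩ b ⟨hb, hba⟩ ⟨hab, habi⟩
  exact h a b ha hb hab hba habi

theorem three_le_card_schurColour : ∀ i, 3 ≤ #{a : ZMod 14 | a ≠ 0 ∧ schurColour a = i} := by
  decide

/-- Every graph `G` that is `3`-Ramsey for `K_3` is also `3`-Ramsey for
`K_3 + K_2`. -/
theorem stmt_2 {V : Type*} (G : SimpleGraph V)
    (hG : IsRamseyFor 3 G (completeGraph (Fin 3))) :
    IsRamseyFor 3 G (cliqueSum 3 2) := by
  intro c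
  by_contra! hno
  obtain ⟨φ, hφ⟩ := exists_isAdmissibleLabelling three_le_card_schurColour hno
  obtain ⟨i, hi⟩ := hG (recolour c schurColour_neg φ)
  exact hφ.not_monoCopy_recolour schurColour_neg isSumFree_schurColour i hi
end

section
/- For all integers n ≥ 3 and r ≥ 3, the multicolour Ramsey numbers satisfy R_r(n, …, n) ≥ R_{r−1}(n, …, n) + n. -/
open SimpleGraph

/-!
If `K_M` has an `(r-1)`-colouring without monochromatic `K_n`, add a disjoint `K_n` coloured
with two of the old colours, not constantly, and give every edge between the two parts a new
colour. A clique in the new colour is bipartite, so has at most two vertices, and a clique in an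
old colour lies inside one part; hence `K_{M+n}` has an `r`-colouring without monochromatic `K_n`.
Ramsey's theorem (the classical induction on the sum of the clique sizes) makes `R_r` finite, and
the construction with `M = R_r - n` gives `R_{r-1} ≤ R_r - n`.
-/

open Finset

section Colouring

variable {V W : Type*} {r : ℕ}

def colourGraph (c : Sym2 V → Fin r) (i : Fin r) : SimpleGraph V :=
  fromEdgeSet (c ⁻¹' {i})

@[simp]
lemma colourGraph_adj {c : Sym2 V → Fin r} {i : Fin r} {u v : V} :
    (colourGraph c i).Adj u v ↔ c s(u, v) = i ∧ u ≠ v :=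
  fromEdgeSet_adj _

lemma isClique_colourGraph_iff {c : Sym2 V → Fin r} {i : Fin r} {s : Set V} :
    (colourGraph c i).IsClique s ↔ s.Pairwise fun u v => c s(u, v) = i :=
  ⟨fun h _ hu _ hv huv => (colourGraph_adj.1 (h hu hv huv)).1,
    fun h _ hu _ hv huv => colourGraph_adj.2 ⟨h hu hv huv, huv⟩⟩

def HasMonoClique (c : Sym2 V → Fin r) (n : Fin r → ℕ) : Prop :=
  ∃ i s, (colourGraph c i).IsNClique (n i) s

lemma HasMonoClique.of_comp {c : Sym2 W → Fin r} {n : Fin r → ℕ} (f : V ↪ W)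
    (h : HasMonoClique (c ∘ Sym2.map f) n) : HasMonoClique c n := by
  obtain ⟨i, s, hs⟩ := h
  refine ⟨i, s.map f, hs.map.mono <| (map_le_iff_le_comap _ _ _).2 fun u v huv => ?_⟩
  rw [colourGraph_adj] at huv
  exact colourGraph_adj.2 ⟨huv.1, f.injective.ne huv.2⟩

lemma hasRamseyProp_iff {N : ℕ} {n : Fin r → ℕ} :
    HasRamseyProp N n ↔ ∀ c : Sym2 (Fin N) → Fin r, HasMonoClique c n := by
  simp only [HasRamseyProp, HasMonoClique, isNClique_iff, isClique_colourGraph_iff,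
    Set.Pairwise, mem_coe, and_comm]

lemma HasRamseyProp.hasMonoClique {N : ℕ} {n : Fin r → ℕ} (h : HasRamseyProp N n)
    (f : Fin N ↪ V) (c : Sym2 V → Fin r) : HasMonoClique c n :=
  (hasRamseyProp_iff.1 h _).of_comp f

lemma HasRamseyProp.exists_le [NeZero r] {N : ℕ} {n : Fin r → ℕ} (h : HasRamseyProp N n) :
    ∃ i, n i ≤ N := by
  obtain ⟨i, s, hs, -⟩ := h fun _ => 0
  exact ⟨i, hs ▸ card_le_univ s |>.trans_eq (Fintype.card_fin N)⟩

end Colouring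

lemma exists_le_card_fiber_of_sum_lt_card {α β : Type*} [DecidableEq β] [Fintype β]
    (f : α → β) (s : Finset α) (N : β → ℕ) (h : ∑ i, N i < #s) :
    ∃ i, N i ≤ #{x ∈ s | f x = i} := by
  by_contra! hlt
  rw [card_eq_sum_card_fiberwise fun x _ => mem_univ (f x)] at h
  exact h.not_ge (sum_le_sum fun i _ => (hlt i).le)

theorem exists_isNClique_subset_of_le_card {r : ℕ} (n : Fin r → ℕ) :
    ∃ N, ∀ {V : Type*} [DecidableEq V] (c : Sym2 V → Fin r) (A : Finset V), N ≤ #A →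
      ∃ i, ∃ s ⊆ A, (colourGraph c i).IsNClique (n i) s := by
  induction hk : ∑ i, n i using Nat.strong_induction_on generalizing n with
  | _ k ih =>
  by_cases h0 : ∃ i, n i = 0
  · obtain ⟨i, hi⟩ := h0
    exact ⟨0, fun c A _ => ⟨i, ∅, empty_subset A, by simp [hi]⟩⟩
  push Not at h0
  have hsum_lt (i : Fin r) : ∑ j, Function.update n i (n i - 1) j < k := by
    refine hk ▸ sum_lt_sum (fun j _ => ?_) ⟨i, mem_univ i, ?_⟩
    · rcases eq_or_ne j i with rfl | hji
      · simp
      · simp [Function.update_of_ne hji]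
    · have := h0 i; simp only [Function.update_self]; omega
  choose N hN using fun i => ih _ (hsum_lt i) _ rfl
  refine ⟨∑ i, N i + 2, fun c A hA => ?_⟩
  obtain ⟨v, hv⟩ : A.Nonempty := card_pos.1 (by omega)
  obtain ⟨i, hi⟩ := exists_le_card_fiber_of_sum_lt_card (fun u => c s(v, u)) (A.erase v) N
    (by rw [card_erase_of_mem hv]; omega)
  obtain ⟨j, s, hsi, hs⟩ := hN i c _ hi
  have hsA : s ⊆ A := hsi.trans <| (filter_subset _ _).trans (erase_subset v A)
  by_cases hji : j = i
  · subst hji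
    rw [Function.update_self] at hs
    have hvs : ∀ u ∈ s, (colourGraph c j).Adj v u := fun u hu => by
      obtain ⟨hu, hcu⟩ := mem_filter.1 (hsi hu)
      exact colourGraph_adj.2 ⟨hcu, (ne_of_mem_erase hu).symm⟩
    refine ⟨j, insert v s, insert_subset hv hsA, ?_⟩
    simpa [Nat.sub_add_cancel (Nat.one_le_iff_ne_zero.2 (h0 j))] using hs.insert hvs
  · rw [Function.update_of_ne hji] at hs
    exact ⟨j, s, hsA, hs⟩

theorem exists_hasRamseyProp {r : ℕ} (n : Fin r → ℕ) : ∃ N, HasRamseyProp N n := by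
  obtain ⟨N, hN⟩ := exists_isNClique_subset_of_le_card n
  refine ⟨N, hasRamseyProp_iff.2 fun c => ?_⟩
  obtain ⟨i, s, -, hs⟩ := hN c univ (by simp)
  exact ⟨i, s, hs⟩

section Join

variable {V W : Type*} {r : ℕ} (c : Sym2 V → Fin r) (d : Sym2 W → Fin r)

def joinColouring : Sym2 (V ⊕ W) → Fin (r + 1) :=
  Sym2.lift ⟨fun
    | .inl a, .inl b => (c s(a, b)).castSucc
    | .inr a, .inr b => (d s(a, b)).castSucc
    | _, _ => Fin.last r, by rintro (a | a) (b | b) <;> simp [Sym2.eq_swap]⟩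

@[simp]
lemma joinColouring_inl_inl (a b : V) :
    joinColouring c d s(.inl a, .inl b) = (c s(a, b)).castSucc := rfl

@[simp]
lemma joinColouring_inr_inr (a b : W) :
    joinColouring c d s(.inr a, .inr b) = (d s(a, b)).castSucc := rfl

@[simp]
lemma joinColouring_inl_inr (a : V) (b : W) :
    joinColouring c d s(.inl a, .inr b) = Fin.last r := rfl

variable {c d} {s : Finset (V ⊕ W)}

lemma card_le_two_of_isClique_joinColouring_last
    (hs : (colourGraph (joinColouring c d) (Fin.last r)).IsClique (s : Set (V ⊕ W))) :
    #s ≤ 2 := by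
  rw [isClique_colourGraph_iff] at hs
  have hl : #s.toLeft ≤ 1 := card_le_one.2 fun a ha b hb => by
    by_contra hab
    exact Fin.castSucc_ne_last _
      (hs (mem_toLeft.1 ha) (mem_toLeft.1 hb) (Sum.inl_injective.ne hab))
  have hr : #s.toRight ≤ 1 := card_le_one.2 fun a ha b hb => by
    by_contra hab
    exact Fin.castSucc_ne_last _
      (hs (mem_toRight.1 ha) (mem_toRight.1 hb) (Sum.inr_injective.ne hab))
  have := card_toLeft_add_card_toRight (u := s)
  omega

lemma isClique_toLeft_of_isClique_joinColouring {j : Fin r}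
    (hs : (colourGraph (joinColouring c d) j.castSucc).IsClique (s : Set (V ⊕ W))) :
    (colourGraph c j).IsClique (s.toLeft : Set V) := by
  rw [isClique_colourGraph_iff] at hs ⊢
  intro a ha b hb hab
  exact Fin.castSucc_injective _ (hs (mem_toLeft.1 ha) (mem_toLeft.1 hb) (Sum.inl_injective.ne hab))

lemma isClique_toRight_of_isClique_joinColouring {j : Fin r}
    (hs : (colourGraph (joinColouring c d) j.castSucc).IsClique (s : Set (V ⊕ W))) :
    (colourGraph d j).IsClique (s.toRight : Set W) := by
  rw [isClique_colourGraph_iff] at hs ⊢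
  intro a ha b hb hab
  exact Fin.castSucc_injective _ (hs (mem_toRight.1 ha) (mem_toRight.1 hb) (Sum.inr_injective.ne hab))

lemma toLeft_eq_empty_or_toRight_eq_empty_of_isClique_joinColouring {j : Fin r}
    (hs : (colourGraph (joinColouring c d) j.castSucc).IsClique (s : Set (V ⊕ W))) :
    s.toLeft = ∅ ∨ s.toRight = ∅ := by
  rw [isClique_colourGraph_iff] at hs
  by_contra! h
  obtain ⟨⟨a, ha⟩, ⟨b, hb⟩⟩ := h
  exact Fin.castSucc_ne_last j (hs (mem_toLeft.1 ha) (mem_toRight.1 hb) Sum.inl_ne_inr).symm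

theorem not_hasMonoClique_joinColouring {k : ℕ} (hk : 3 ≤ k)
    (hc : ¬HasMonoClique c fun _ => k) (hd : ¬HasMonoClique d fun _ => k) :
    ¬HasMonoClique (joinColouring c d) fun _ => k := by
  rintro ⟨i, s, hs⟩
  have hcard : #s.toLeft + #s.toRight = k := card_toLeft_add_card_toRight.trans hs.card_eq
  obtain ⟨j, rfl⟩ | rfl := i.eq_castSucc_or_eq_last
  · rcases toLeft_eq_empty_or_toRight_eq_empty_of_isClique_joinColouring hs.isClique with h | h
    · exact hd ⟨j, s.toRight, isClique_toRight_of_isClique_joinColouring hs.isClique,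
        by simpa [h] using hcard⟩
    · exact hc ⟨j, s.toLeft, isClique_toLeft_of_isClique_joinColouring hs.isClique,
        by simpa [h] using hcard⟩
  · have := card_le_two_of_isClique_joinColouring_last hs.isClique
    have : #s = k := hs.card_eq
    omega

end Join

theorem exists_not_hasMonoClique_fin {n r : ℕ} (hn : 3 ≤ n) (hr : 2 ≤ r) :
    ∃ d : Sym2 (Fin n) → Fin r, ¬HasMonoClique d fun _ => n := by
  obtain ⟨n, rfl⟩ : ∃ m, n = m + 3 := ⟨n - 3, by omega⟩
  obtain ⟨r, rfl⟩ : ∃ q, r = q + 2 := ⟨r - 2, by omega⟩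
  refine ⟨fun e => if e = s(0, 1) then 0 else 1, ?_⟩
  rintro ⟨i, s, hs⟩
  have hclique := isClique_colourGraph_iff.1 hs.isClique
  rw [eq_univ_of_card s (hs.card_eq.trans (Fintype.card_fin _).symm), coe_univ] at hclique
  have h2 : (2 : Fin (n + 3)) ≠ 0 ∧ (2 : Fin (n + 3)) ≠ 1 := by
    simp [Fin.ext_iff, Nat.mod_eq_of_lt (show 2 < n + 3 by omega)]
  have h01 : 0 = i := by simpa using hclique (Set.mem_univ 0) (Set.mem_univ 1) zero_ne_one
  have h02 : 1 = i := by simpa [h2.2] using hclique (Set.mem_univ 0) (Set.mem_univ 2) h2.1.symm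
  exact zero_ne_one (h01.trans h02.symm)

theorem hasRamseyProp_of_hasRamseyProp_add {M n k : ℕ} (hn : 3 ≤ n) (hk : 2 ≤ k)
    (h : HasRamseyProp (M + n) fun _ : Fin (k + 1) => n) :
    HasRamseyProp M fun _ : Fin k => n := by
  by_contra hM
  obtain ⟨c, hc⟩ : ∃ c : Sym2 (Fin M) → Fin k, ¬HasMonoClique c fun _ => n := by
    simpa [hasRamseyProp_iff] using hM
  obtain ⟨d, hd⟩ := exists_not_hasMonoClique_fin hn hk
  exact not_hasMonoClique_joinColouring hn hc hd
    (h.hasMonoClique finSumFinEquiv.symm.toEmbedding _)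

/-- For `n, r ≥ 3`, `R_r(n, …, n) ≥ R_{r-1}(n, …, n) + n`. -/
theorem stmt_5 (n r : ℕ) (hn : 3 ≤ n) (hr : 3 ≤ r) :
    ramseyNumber (fun _ : Fin (r - 1) => n) + n ≤ ramseyNumber (fun _ : Fin r => n) := by
  obtain ⟨k, rfl⟩ : ∃ k, r = k + 1 := ⟨r - 1, by omega⟩
  rw [Nat.add_sub_cancel]
  have hR : HasRamseyProp (ramseyNumber fun _ : Fin (k + 1) => n) fun _ => n :=
    Nat.sInf_mem (exists_hasRamseyProp _)
  obtain ⟨-, hnR⟩ := hR.exists_le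
  obtain ⟨M, hM⟩ : ∃ M, ramseyNumber (fun _ : Fin (k + 1) => n) = M + n :=
    ⟨_, (Nat.sub_add_cancel hnR).symm⟩
  rw [hM] at hR ⊢
  have : ramseyNumber (fun _ : Fin k => n) ≤ M :=
    Nat.sInf_le (hasRamseyProp_of_hasRamseyProp_add hn (by omega) hR)
  omega
end

section
/- Let G be a graph that is 3-Ramsey for K_3. If a 3-edge-colouring of G contains a monochromatic triangle in each of the three colours, then this colouring contains a monochromatic copy of K_3 + K_2, i.e. a monochromatic triangle together with a vertex-disjoint edge of the same colour. -/
open SimpleGraph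

/-!
Suppose no colour class contains a triangle plus a disjoint edge, and let `S` be the at most
nine vertices of the three given monochromatic triangles. An edge avoiding `S` would complete
the triangle of its own colour to a `K_3 + K_2`, so `S` is a vertex cover of `G`. Hence `G` is
properly coloured by sending `S` injectively to nine colours and everything else to a tenth,
i.e. `G` maps homomorphically to `K_10`. Ramseyness for cliques passes along homomorphisms,
but `K_10` has a 3-edge-colouring without monochromatic triangles.
-/

section

variable {V : Type*} {G : SimpleGraph V}

@[simp]
lemma cliqueSum_adj_inl_inl {n m : ℕ} {a b : Fin n} :
    (cliqueSum n m).Adj (.inl a) (.inl b) ↔ a ≠ b := by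
  simp [cliqueSum]

@[simp]
lemma cliqueSum_adj_inr_inr {n m : ℕ} {a b : Fin m} :
    (cliqueSum n m).Adj (.inr a) (.inr b) ↔ a ≠ b := by
  simp [cliqueSum]

@[simp]
lemma not_cliqueSum_adj_inl_inr {n m : ℕ} {a : Fin n} {b : Fin m} :
    ¬ (cliqueSum n m).Adj (.inl a) (.inr b) := by
  simp [cliqueSum]

@[simp]
lemma not_cliqueSum_adj_inr_inl {n m : ℕ} {a : Fin m} {b : Fin n} :
    ¬ (cliqueSum n m).Adj (.inr a) (.inl b) := by
  simp [cliqueSum]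

lemma monoCopy_cliqueSum_two {n r : ℕ} {c : Sym2 V → Fin r} {i : Fin r}
    (f : completeGraph (Fin n) →g G) (hf : Function.Injective f)
    (hfc : ∀ a b, a ≠ b → c s(f a, f b) = i)
    {u v : V} (huv : G.Adj u v) (hc : c s(u, v) = i)
    (hu : u ∉ Set.range f) (hv : v ∉ Set.range f) :
    MonoCopy G (cliqueSum n 2) c i := by
  have hadj : ∀ x y, (cliqueSum n 2).Adj x y →
      G.Adj (Sum.elim f ![u, v] x) (Sum.elim f ![u, v] y) ∧
        c s(Sum.elim f ![u, v] x, Sum.elim f ![u, v] y) = i := by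
    rintro (a | a) (b | b) hab <;> simp only [cliqueSum_adj_inl_inl, cliqueSum_adj_inr_inr,
      not_cliqueSum_adj_inl_inr, not_cliqueSum_adj_inr_inl] at hab
    · exact ⟨f.map_adj hab, hfc a b hab⟩
    · fin_cases a <;> fin_cases b <;> simp_all [Sym2.eq_swap, G.adj_comm]
  refine ⟨⟨Sum.elim f ![u, v], fun hxy => (hadj _ _ hxy).1⟩, ?_, fun x y hxy => (hadj x y hxy).2⟩
  refine hf.sumElim (injective_pair_iff_ne.mpr huv.ne) fun a b => ?_
  fin_cases b
  exacts [fun h => hu ⟨a, h⟩, fun h => hv ⟨a, h⟩]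

lemma colorable_of_vertexCover [DecidableEq V] (s : Finset V)
    (hs : ∀ u v, G.Adj u v → u ∈ s ∨ v ∈ s) : G.Colorable (s.card + 1) := by
  let color : V → Fin (s.card + 1) := fun v =>
    if hv : v ∈ s then (s.equivFin ⟨v, hv⟩).castSucc else Fin.last _
  refine ⟨Coloring.mk color fun {u v} huv => ?_⟩
  by_cases hu : u ∈ s <;> by_cases hv : v ∈ s
  · simp [color, hu, hv, huv.ne]
  · simp [color, hu, hv, Fin.castSucc_ne_last]
  · simp [color, hu, hv, (Fin.castSucc_ne_last _).symm]
  · exact ((hs u v huv).elim hu hv).elim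

lemma IsRamseyFor.of_hom {V' W : Type*} {r : ℕ} {G' : SimpleGraph V'} (φ : G →g G')
    (h : IsRamseyFor r G (completeGraph W)) : IsRamseyFor r G' (completeGraph W) := by
  intro c
  obtain ⟨i, f, -, hfc⟩ := h (c ∘ Sym2.map φ)
  exact ⟨i, φ.comp f, Hom.injective_of_top_hom _, hfc⟩

/-- The colour of the edge `ab` of `K_10` is determined by `a - b` in `ℤ/10`; the colour
classes `{±1, ±4}`, `{±2, ±3}`, `{5}` contain no solution of `x + y + z = 0`, so none of them
contains a triangle. -/
def circulantColour (d : Fin 10) : Fin 3 :=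
  if d ∈ ({1, 4, 6, 9} : Finset (Fin 10)) then 0
  else if d ∈ ({2, 3, 7, 8} : Finset (Fin 10)) then 1
  else 2

lemma circulantColour_neg : ∀ d, circulantColour (-d) = circulantColour d := by decide

lemma circulantColour_no_triangle : ∀ a b e : Fin 10, a ≠ b → a ≠ e → b ≠ e →
    ¬ (circulantColour (a - b) = circulantColour (a - e) ∧
      circulantColour (a - b) = circulantColour (b - e)) := by
  decide

lemma not_isRamseyFor_completeGraph_fin_ten :
    ¬ IsRamseyFor 3 (completeGraph (Fin 10)) (completeGraph (Fin 3)) := by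
  intro h
  let c : Sym2 (Fin 10) → Fin 3 := Sym2.lift ⟨fun a b => circulantColour (a - b),
    fun a b => by
      show circulantColour (a - b) = circulantColour (b - a)
      rw [← neg_sub, circulantColour_neg]⟩
  obtain ⟨j, f, hf, hfc⟩ := h c
  have hcol : ∀ a b : Fin 3, a ≠ b → circulantColour (f a - f b) = j := hfc
  exact circulantColour_no_triangle (f 0) (f 1) (f 2)
    (hf.ne (by decide)) (hf.ne (by decide)) (hf.ne (by decide))
    ⟨by rw [hcol 0 1 (by decide), hcol 0 2 (by decide)],
      by rw [hcol 0 1 (by decide), hcol 1 2 (by decide)]⟩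

lemma not_isRamseyFor_of_colorable (hG : G.Colorable 10) :
    ¬ IsRamseyFor 3 G (completeGraph (Fin 3)) := fun h =>
  not_isRamseyFor_completeGraph_fin_ten (h.of_hom hG.some)

end

/-- Let `G` be `3`-Ramsey for `K_3`. If a 3-edge-colouring `c` of `G`
contains a monochromatic triangle in each of the three colours, then it contains a
monochromatic copy of `K_3 + K_2`. -/
theorem stmt_10 {V : Type*} (G : SimpleGraph V)
    (hG : IsRamseyFor 3 G (completeGraph (Fin 3)))
    (c : Sym2 V → Fin 3)
    (h : ∀ i : Fin 3, MonoCopy G (completeGraph (Fin 3)) c i) :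
    ∃ i : Fin 3, MonoCopy G (cliqueSum 3 2) c i := by
  classical
  by_contra! hcon
  choose f hf hfc using h
  let S : Finset V := Finset.univ.image fun p : Fin 3 × Fin 3 => f p.1 p.2
  have hcover : ∀ u v, G.Adj u v → u ∈ S ∨ v ∈ S := by
    intro u v huv
    by_contra! hout
    refine hcon (c s(u, v)) (monoCopy_cliqueSum_two _ (hf _) (hfc _) huv rfl ?_ ?_)
    exacts [fun ⟨a, ha⟩ => hout.1 (Finset.mem_image.mpr ⟨(_, a), Finset.mem_univ _, ha⟩),
      fun ⟨a, ha⟩ => hout.2 (Finset.mem_image.mpr ⟨(_, a), Finset.mem_univ _, ha⟩)]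
  have hS : S.card ≤ 9 := Finset.card_image_le.trans (by simp)
  exact not_isRamseyFor_of_colorable ((colorable_of_vertexCover S hcover).mono (by omega)) hG
end
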